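/- arXiv:1704.05354 — 2 statements merged into one kernel-verified Lean document; each statement's English description precedes it below -/
import Mathlib

section
/- Let G be the group ⟨x, y, t | x⁴ = y² = t² = 1, xy = yx, xt = tx, tyt = x²y⟩ (of order 16). Then the subgroups of G of order 8 having trivial intersection with the subgroup ⟨t⟩ are exactly: ⟨x⟩ × ⟨y⟩, ⟨x⟩ × ⟨ty⟩ (both isomorphic to ℤ/4 × ℤ/2), ⟨xt, y⟩ (isomorphic to D₈), and ⟨xt, yt⟩ (isomorphic to Q₈). -/
namespace Stmt0Aux

structure K where
  a : ZMod 4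
  b : ZMod 2
  c : ZMod 2
  deriving DecidableEq, Fintype

def twist (c b : ZMod 2) : ZMod 4 := if c = 1 ∧ b = 1 then 2 else 0

def kmul (g h : K) : K := ⟨g.a + h.a + twist g.c h.b, g.b + h.b, g.c + h.c⟩
def kinv (g : K) : K := ⟨-(g.a + twist g.c g.b), g.b, g.c⟩

instance : Mul K := ⟨kmul⟩
instance : One K := ⟨⟨0, 0, 0⟩⟩
instance : Inv K := ⟨kinv⟩

lemma twist_assoc : ∀ gc hc hb kb : ZMod 2,
    twist gc hb + twist (gc + hc) kb = twist hc kb + twist gc (hb + kb) := by decide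

instance : Group K where
  mul_assoc := by
    rintro ⟨ga, gb, gc⟩ ⟨ha, hb, hc⟩ ⟨ka, kb, kc⟩
    show kmul (kmul _ _) _ = kmul _ (kmul _ _)
    simp only [kmul, K.mk.injEq]
    refine ⟨?_, by ring, by ring⟩
    linear_combination twist_assoc gc hc hb kb
  one_mul := by decide
  mul_one := by decide
  inv_mul_cancel := by decide

lemma card_K : Nat.card K = 16 := by rw [Nat.card_eq_fintype_card]; decide

lemma twist_val : ∀ gc hb : ZMod 2, ((2 * (gc.val * hb.val) : ℕ) : ZMod 4) = twist gc hb := by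
  decide

/-! ### Generators in `K` -/

def k1 : K := ⟨1, 0, 0⟩   -- x
def k2 : K := ⟨0, 1, 0⟩   -- y
def kT : K := ⟨0, 0, 1⟩   -- t
def k2' : K := ⟨2, 1, 1⟩  -- t*y
def u3 : K := ⟨1, 0, 1⟩   -- x*t
def v4 : K := ⟨0, 1, 1⟩   -- y*t

def psi1 : Multiplicative (ZMod 4 × ZMod 2) →* K where
  toFun g := ⟨(Multiplicative.toAdd g).1, (Multiplicative.toAdd g).2, 0⟩
  map_one' := by decide
  map_mul' := by decide

def psi2 : Multiplicative (ZMod 4 × ZMod 2) →* K where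
  toFun g := ⟨(Multiplicative.toAdd g).1 + ((Multiplicative.toAdd g).2.val : ZMod 4),
    (Multiplicative.toAdd g).2, (Multiplicative.toAdd g).2⟩
  map_one' := by decide
  map_mul' := by decide

def psi3 : DihedralGroup 4 →* K where
  toFun g := match g with
    | .r i => u3 ^ i.val
    | .sr i => k2 * u3 ^ i.val
  map_one' := by decide
  map_mul' := by decide

def psi4 : QuaternionGroup 2 →* K where
  toFun g := match g with
    | .a i => u3 ^ i.val
    | .xa i => v4 * u3 ^ i.val
  map_one' := by decide
  map_mul' := by decide

lemma psi1_inj : Function.Injective psi1 := by decide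
lemma psi2_inj : Function.Injective psi2 := by decide
lemma psi3_inj : Function.Injective psi3 := by decide
lemma psi4_inj : Function.Injective psi4 := by decide

lemma psi1_range : psi1.range = Subgroup.closure {k1, k2} := by
  apply le_antisymm
  · rintro g ⟨d, rfl⟩
    have hd : psi1 d =
        k1 ^ (Multiplicative.toAdd d).1.val * k2 ^ (Multiplicative.toAdd d).2.val := by
      revert d; decide
    rw [hd]
    exact mul_mem (pow_mem (Subgroup.subset_closure (by simp)) _)
      (pow_mem (Subgroup.subset_closure (by simp)) _)
  · rw [Subgroup.closure_le]
    rintro g hg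
    rcases hg with rfl | rfl
    · exact ⟨Multiplicative.ofAdd (1, 0), by decide⟩
    · exact ⟨Multiplicative.ofAdd (0, 1), by decide⟩

lemma psi2_range : psi2.range = Subgroup.closure {k1, k2'} := by
  apply le_antisymm
  · rintro g ⟨d, rfl⟩
    have hd : psi2 d = k1 ^ ((Multiplicative.toAdd d).1 -
        ((Multiplicative.toAdd d).2.val : ZMod 4)).val *
          k2' ^ (Multiplicative.toAdd d).2.val := by
      revert d; decide
    rw [hd]
    exact mul_mem (pow_mem (Subgroup.subset_closure (by simp)) _)
      (pow_mem (Subgroup.subset_closure (by simp)) _)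
  · rw [Subgroup.closure_le]
    rintro g hg
    rcases hg with rfl | rfl
    · exact ⟨Multiplicative.ofAdd (1, 0), by decide⟩
    · exact ⟨Multiplicative.ofAdd (1, 1), by decide⟩

lemma psi3_range : psi3.range = Subgroup.closure {u3, k2} := by
  apply le_antisymm
  · rintro g ⟨d, rfl⟩
    rcases d with i | i
    · exact pow_mem (Subgroup.subset_closure (by simp)) _
    · exact mul_mem (Subgroup.subset_closure (by simp))
        (pow_mem (Subgroup.subset_closure (by simp)) _)
  · rw [Subgroup.closure_le]
    rintro g hg
    rcases hg with rfl | rfl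
    · exact ⟨DihedralGroup.r 1, by decide⟩
    · exact ⟨DihedralGroup.sr 0, by decide⟩

lemma psi4_range : psi4.range = Subgroup.closure {u3, v4} := by
  apply le_antisymm
  · rintro g ⟨d, rfl⟩
    rcases d with i | i
    · exact pow_mem (Subgroup.subset_closure (by simp)) _
    · exact mul_mem (Subgroup.subset_closure (by simp))
        (pow_mem (Subgroup.subset_closure (by simp)) _)
  · rw [Subgroup.closure_le]
    rintro g hg
    rcases hg with rfl | rfl
    · exact ⟨QuaternionGroup.a 1, by decide⟩
    · exact ⟨QuaternionGroup.xa 0, by decide⟩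

lemma psi1_ne_t : ∀ d, psi1 d ≠ kT := by decide
lemma psi2_ne_t : ∀ d, psi2 d ≠ kT := by decide
lemma psi3_ne_t : ∀ d, psi3 d ≠ kT := by decide
lemma psi4_ne_t : ∀ d, psi4 d ≠ kT := by decide

/-! ### Word computations in `G` -/

section Word

variable {G : Type*} [Group G] {x y t : G}

lemma ty_eq (ht : t ^ 2 = 1) (htyt : t * y * t = x ^ 2 * y) :
    t * y = x ^ 2 * (y * t) := by
  have htt : t * t = 1 := by rw [← pow_two]; exact ht
  have h := congrArg (· * t) htyt
  simpa [mul_assoc, htt] using h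

lemma word_mul (ht : t ^ 2 = 1)
    (hxy : x * y = y * x) (hxt : x * t = t * x) (htyt : t * y * t = x ^ 2 * y)
    (a b c a' b' c' : ℕ) :
    (x ^ a * y ^ b * t ^ c) * (x ^ a' * y ^ b' * t ^ c') =
      x ^ (a + a' + 2 * (c * b')) * y ^ (b + b') * t ^ (c + c') := by
  have sxy : ∀ (m n : ℕ) (g : G), y ^ m * (x ^ n * g) = x ^ n * (y ^ m * g) := by
    intro m n g
    have h : y ^ m * x ^ n = x ^ n * y ^ m :=
      ((show Commute x y from hxy).symm.pow_pow m n).eq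
    rw [← mul_assoc, h, mul_assoc]
  have stx : ∀ (m n : ℕ) (g : G), t ^ m * (x ^ n * g) = x ^ n * (t ^ m * g) := by
    intro m n g
    have h : t ^ m * x ^ n = x ^ n * t ^ m :=
      ((show Commute x t from hxt).symm.pow_pow m n).eq
    rw [← mul_assoc, h, mul_assoc]
  have st1 : ∀ g : G, t * (y * g) = x ^ 2 * (y * (t * g)) := by
    intro g
    rw [← mul_assoc, ty_eq ht htyt]
    simp [mul_assoc]
  have stc : ∀ (m : ℕ) (g : G), t ^ m * (y * g) = x ^ (2 * m) * (y * (t ^ m * g)) := by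
    intro m
    induction m with
    | zero => simp
    | succ n ih =>
      intro g
      have e1 : t ^ (n + 1) * (y * g) = t ^ n * (t * (y * g)) := by
        rw [pow_succ, mul_assoc]
      rw [e1, st1, stx, ih, ← mul_assoc, ← pow_add]
      have e2 : t ^ n * (t * g) = t ^ (n + 1) * g := by rw [pow_succ, mul_assoc]
      rw [e2]
      ring_nf
  have sty : ∀ (m n : ℕ) (g : G), t ^ m * (y ^ n * g) =
      x ^ (2 * (m * n)) * (y ^ n * (t ^ m * g)) := by
    intro m n
    induction n with
    | zero => simp
    | succ n ih =>
      intro g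
      have e1 : t ^ m * (y ^ (n + 1) * g) = t ^ m * (y ^ n * (y * g)) := by
        rw [pow_succ, mul_assoc]
      rw [e1, ih, stc, sxy, ← mul_assoc, ← pow_add]
      have e2 : y ^ n * (y * (t ^ m * g)) = y ^ (n + 1) * (t ^ m * g) := by
        rw [pow_succ, mul_assoc]
      rw [e2]
      ring_nf
  simp only [pow_add, mul_assoc]
  rw [stx, sty, sxy, sxy]

lemma xpow_congr (hx : x ^ 4 = 1) (A : ZMod 4) (n : ℕ) (h : (n : ZMod 4) = A) :
    x ^ A.val = x ^ n := by
  rw [← h, ZMod.val_natCast]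
  exact (pow_eq_pow_mod n hx).symm

lemma ypow_congr (hy : y ^ 2 = 1) (A : ZMod 2) (n : ℕ) (h : (n : ZMod 2) = A) :
    y ^ A.val = y ^ n := by
  rw [← h, ZMod.val_natCast]
  exact (pow_eq_pow_mod n hy).symm

def phiHom (x y t : G) (hx : x ^ 4 = 1) (hy : y ^ 2 = 1) (ht : t ^ 2 = 1)
    (hxy : x * y = y * x) (hxt : x * t = t * x) (htyt : t * y * t = x ^ 2 * y) :
    K →* G where
  toFun g := x ^ g.a.val * y ^ g.b.val * t ^ g.c.val
  map_one' := by
    show x ^ (0 : ZMod 4).val * y ^ (0 : ZMod 2).val * t ^ (0 : ZMod 2).val = 1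
    simp [ZMod.val_zero]
  map_mul' g h := by
    rcases g with ⟨ga, gb, gc⟩
    rcases h with ⟨ha, hb, hc⟩
    show x ^ (ga + ha + twist gc hb).val * y ^ (gb + hb).val * t ^ (gc + hc).val = _
    rw [word_mul ht hxy hxt htyt]
    have e1 : x ^ (ga + ha + twist gc hb).val =
        x ^ (ga.val + ha.val + 2 * (gc.val * hb.val)) := by
      refine xpow_congr hx _ _ ?_
      rw [Nat.cast_add, Nat.cast_add, ZMod.natCast_val, ZMod.natCast_val,
        ZMod.cast_id, ZMod.cast_id, twist_val]
    have e2 : y ^ (gb + hb).val = y ^ (gb.val + hb.val) := by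
      refine ypow_congr hy _ _ ?_
      rw [Nat.cast_add, ZMod.natCast_val, ZMod.natCast_val, ZMod.cast_id, ZMod.cast_id]
    have e3 : t ^ (gc + hc).val = t ^ (gc.val + hc.val) := by
      refine ypow_congr ht _ _ ?_
      rw [Nat.cast_add, ZMod.natCast_val, ZMod.natCast_val, ZMod.cast_id, ZMod.cast_id]
    rw [e1, e2, e3]

end Word

/-! ### Generic transfer lemmas -/

lemma range_closure_aux {D K' G : Type*} [Group D] [Group K'] [Group G]
    (ψ : D →* K') (Φ : K' →* G) (u v : K')
    (hr : ψ.range = Subgroup.closure {u, v}) (hψ : Function.Injective ψ)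
    (hΦ : Function.Injective Φ) :
    Subgroup.closure {Φ u, Φ v} = (Φ.comp ψ).range ∧
    Nonempty ((Subgroup.closure {Φ u, Φ v} : Subgroup G) ≃* D) ∧
    Nat.card (Subgroup.closure {Φ u, Φ v} : Subgroup G) = Nat.card D := by
  have h1 : (Φ.comp ψ).range = Subgroup.closure {Φ u, Φ v} := by
    rw [MonoidHom.range_comp, hr, MonoidHom.map_closure]
    congr 1
    rw [Set.image_insert_eq, Set.image_singleton]
  have hinj : Function.Injective (Φ.comp ψ) := fun a b hab => hψ (hΦ hab)
  have equiv : (Subgroup.closure {Φ u, Φ v} : Subgroup G) ≃* D :=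
    (MulEquiv.subgroupCongr h1.symm).trans (MonoidHom.ofInjective hinj).symm
  exact ⟨h1.symm, ⟨equiv⟩, Nat.card_congr equiv.toEquiv⟩

lemma inf_aux {D K' G : Type*} [Group D] [Group K'] [Group G]
    (ψ : D →* K') (Φ : K' →* G) (hΦ : Function.Injective Φ)
    {t : G} (ht : t ^ 2 = 1) (tK : K') (hΦt : Φ tK = t)
    (hψt : ∀ d, ψ d ≠ tK) {S : Set G}
    (hclos : Subgroup.closure S = (Φ.comp ψ).range) :
    Subgroup.closure S ⊓ Subgroup.closure {t} = ⊥ := by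
  rw [Subgroup.eq_bot_iff_forall]
  intro g hg
  rw [Subgroup.mem_inf] at hg
  obtain ⟨hg1, hg2⟩ := hg
  rw [Subgroup.mem_closure_singleton] at hg2
  obtain ⟨n, rfl⟩ := hg2
  have h2 : t ^ (2 : ℤ) = 1 := by rw [zpow_two, ← pow_two]; exact ht
  have hmod : t ^ n = t ^ (n % 2) := by
    conv_lhs => rw [← Int.mul_ediv_add_emod n 2]
    rw [zpow_add, zpow_mul, h2, one_zpow, one_mul]
  rcases Int.emod_two_eq n with h | h
  · rw [hmod, h, zpow_zero]
  · exfalso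
    rw [hmod, h, zpow_one] at hg1
    rw [hclos] at hg1
    obtain ⟨d, hd⟩ := hg1
    refine hψt d (hΦ ?_)
    rw [hΦt]
    exact hd

end Stmt0Aux

open Stmt0Aux in
/-- For the group `G = ⟨x, y, t | x⁴ = y² = t² = 1, xy = yx, xt = tx,
tyt = x²y⟩` of order 16, the subgroups of order 8 having trivial intersection with `⟨t⟩`
are exactly `⟨x⟩ × ⟨y⟩`, `⟨x⟩ × ⟨ty⟩` (both `≅ ℤ/4 × ℤ/2`), `⟨xt, y⟩ ≅ D₈` and
`⟨xt, yt⟩ ≅ Q₈`. -/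
theorem stmt_0 {G : Type*} [Group G] (x y t : G)
    (hx : x ^ 4 = 1) (hy : y ^ 2 = 1) (ht : t ^ 2 = 1)
    (hxy : x * y = y * x) (hxt : x * t = t * x) (htyt : t * y * t = x ^ 2 * y)
    (hgen : Subgroup.closure {x, y, t} = ⊤) (hcard : Nat.card G = 16) :
    (∀ H : Subgroup G,
      (Nat.card H = 8 ∧ H ⊓ Subgroup.closure {t} = ⊥) ↔
        (H = Subgroup.closure {x, y} ∨ H = Subgroup.closure {x, t * y} ∨
          H = Subgroup.closure {x * t, y} ∨ H = Subgroup.closure {x * t, y * t})) ∧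
    Nonempty ((Subgroup.closure {x, y} : Subgroup G) ≃* Multiplicative (ZMod 4 × ZMod 2)) ∧
    Nonempty ((Subgroup.closure {x, t * y} : Subgroup G) ≃* Multiplicative (ZMod 4 × ZMod 2)) ∧
    Nonempty ((Subgroup.closure {x * t, y} : Subgroup G) ≃* DihedralGroup 4) ∧
    Nonempty ((Subgroup.closure {x * t, y * t} : Subgroup G) ≃* QuaternionGroup 2) := by
  haveI : Finite G := Nat.finite_of_card_ne_zero (by rw [hcard]; norm_num)
  set Φ : K →* G := phiHom x y t hx hy ht hxy hxt htyt with hΦdef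
  -- images of the distinguished elements
  have hX : Φ k1 = x := by
    show x ^ (1 : ZMod 4).val * y ^ (0 : ZMod 2).val * t ^ (0 : ZMod 2).val = x
    norm_num [show (1 : ZMod 4).val = 1 from rfl]
  have hY : Φ k2 = y := by
    show x ^ (0 : ZMod 4).val * y ^ (1 : ZMod 2).val * t ^ (0 : ZMod 2).val = y
    norm_num [show (1 : ZMod 2).val = 1 from rfl]
  have hT : Φ kT = t := by
    show x ^ (0 : ZMod 4).val * y ^ (0 : ZMod 2).val * t ^ (1 : ZMod 2).val = t
    norm_num [show (1 : ZMod 2).val = 1 from rfl]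
  have hXT : Φ u3 = x * t := by
    show x ^ (1 : ZMod 4).val * y ^ (0 : ZMod 2).val * t ^ (1 : ZMod 2).val = x * t
    norm_num [show (1 : ZMod 4).val = 1 from rfl, show (1 : ZMod 2).val = 1 from rfl]
  have hYT : Φ v4 = y * t := by
    show x ^ (0 : ZMod 4).val * y ^ (1 : ZMod 2).val * t ^ (1 : ZMod 2).val = y * t
    norm_num [show (1 : ZMod 2).val = 1 from rfl]
  have hTY : Φ k2' = t * y := by
    show x ^ (2 : ZMod 4).val * y ^ (1 : ZMod 2).val * t ^ (1 : ZMod 2).val = t * y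
    rw [show (2 : ZMod 4).val = 2 from rfl, show (1 : ZMod 2).val = 1 from rfl,
      pow_one, pow_one, ty_eq ht htyt, mul_assoc]
  -- Φ is bijective
  have hsurj : Function.Surjective Φ := by
    rw [← MonoidHom.range_eq_top]
    have hle : Subgroup.closure {x, y, t} ≤ Φ.range := by
      rw [Subgroup.closure_le]
      intro g hg
      simp only [Set.mem_insert_iff, Set.mem_singleton_iff] at hg
      rcases hg with rfl | rfl | rfl
      · exact ⟨k1, hX⟩
      · exact ⟨k2, hY⟩
      · exact ⟨kT, hT⟩
    rw [hgen] at hle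
    exact top_unique hle
  have hΦinj : Function.Injective Φ :=
    ((Nat.bijective_iff_surjective_and_card Φ).2 ⟨hsurj, by rw [card_K, hcard]⟩).1
  -- the four subgroups
  obtain ⟨hcl1, hne1, hcard1⟩ := range_closure_aux psi1 Φ k1 k2 psi1_range psi1_inj hΦinj
  obtain ⟨hcl2, hne2, hcard2⟩ := range_closure_aux psi2 Φ k1 k2' psi2_range psi2_inj hΦinj
  obtain ⟨hcl3, hne3, hcard3⟩ := range_closure_aux psi3 Φ u3 k2 psi3_range psi3_inj hΦinj
  obtain ⟨hcl4, hne4, hcard4⟩ := range_closure_aux psi4 Φ u3 v4 psi4_range psi4_inj hΦinj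
  rw [hX, hY] at hcl1 hne1 hcard1
  rw [hX, hTY] at hcl2 hne2 hcard2
  rw [hXT, hY] at hcl3 hne3 hcard3
  rw [hXT, hYT] at hcl4 hne4 hcard4
  have hc1 : Nat.card (Subgroup.closure {x, y} : Subgroup G) = 8 := by
    rw [hcard1, Nat.card_eq_fintype_card]; decide
  have hc2 : Nat.card (Subgroup.closure {x, t * y} : Subgroup G) = 8 := by
    rw [hcard2, Nat.card_eq_fintype_card]; decide
  have hc3 : Nat.card (Subgroup.closure {x * t, y} : Subgroup G) = 8 := by
    rw [hcard3, Nat.card_eq_fintype_card, DihedralGroup.card]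
  have hc4 : Nat.card (Subgroup.closure {x * t, y * t} : Subgroup G) = 8 := by
    rw [hcard4, Nat.card_eq_fintype_card, QuaternionGroup.card]
  have hi1 := inf_aux psi1 Φ hΦinj ht kT hT psi1_ne_t hcl1
  have hi2 := inf_aux psi2 Φ hΦinj ht kT hT psi2_ne_t hcl2
  have hi3 := inf_aux psi3 Φ hΦinj ht kT hT psi3_ne_t hcl3
  have hi4 := inf_aux psi4 Φ hΦinj ht kT hT psi4_ne_t hcl4
  have htne : t ≠ 1 := by
    intro h
    have h' : Φ kT = Φ 1 := by rw [hT, h, map_one]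
    exact absurd (hΦinj h') (by decide)
  refine ⟨fun H => ⟨fun ⟨h8, hbot⟩ => ?_, ?_⟩, hne1, hne2, hne3, hne4⟩
  · -- forward direction
    have hidx : H.index = 2 := by
      have hc := H.card_mul_index
      rw [h8, hcard] at hc
      omega
    have htH : t ∉ H := by
      intro hmem
      have hmem2 : t ∈ H ⊓ Subgroup.closure {t} :=
        Subgroup.mem_inf.2 ⟨hmem, Subgroup.subset_closure (Set.mem_singleton t)⟩
      rw [hbot] at hmem2
      exact htne (Subgroup.mem_bot.1 hmem2)
    have hmul : ∀ a b : G, a ∉ H → b ∉ H → a * b ∈ H := fun a b ha hb =>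
      (Subgroup.mul_mem_iff_of_index_two hidx).2 (iff_of_false ha hb)
    have key : ∀ S : Set G, S ⊆ H → Nat.card (Subgroup.closure S : Subgroup G) = 8 →
        H = Subgroup.closure S := by
      intro S hS hcS
      refine (Subgroup.eq_of_le_of_card_ge ((Subgroup.closure_le H).2 hS) ?_).symm
      rw [h8, hcS]
    by_cases hxH : x ∈ H <;> by_cases hyH : y ∈ H
    · exact Or.inl (key _ (by
        intro g hg
        simp only [Set.mem_insert_iff, Set.mem_singleton_iff] at hg
        rcases hg with rfl | rfl
        exacts [hxH, hyH]) hc1)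
    · refine Or.inr (Or.inl (key _ (by
        intro g hg
        simp only [Set.mem_insert_iff, Set.mem_singleton_iff] at hg
        rcases hg with rfl | rfl
        exacts [hxH, hmul t y htH hyH]) hc2))
    · refine Or.inr (Or.inr (Or.inl (key _ (by
        intro g hg
        simp only [Set.mem_insert_iff, Set.mem_singleton_iff] at hg
        rcases hg with rfl | rfl
        exacts [hmul x t hxH htH, hyH]) hc3)))
    · refine Or.inr (Or.inr (Or.inr (key _ (by
        intro g hg
        simp only [Set.mem_insert_iff, Set.mem_singleton_iff] at hg
        rcases hg with rfl | rfl
        exacts [hmul x t hxH htH, hmul y t hyH htH]) hc4)))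
  · -- backward direction
    rintro (rfl | rfl | rfl | rfl)
    exacts [⟨hc1, hi1⟩, ⟨hc2, hi2⟩, ⟨hc3, hi3⟩, ⟨hc4, hi4⟩]
end

section
/- Let G = ⟨a, b, c | a⁴ = b² = c² = 1, ac = ca, bc = cb, bab⁻¹ = ac⟩ (a group of order 16). For every 2-dimensional complex irreducible character χ of G, the fourth Frobenius-Schur indicator ν₄(χ) = (1/16) Σ_{g∈G} χ(g⁴) equals 2. -/
/-- For the group `G = ⟨a, b, c | a⁴ = b² = c² = 1, ac = ca, bc = cb,
bab⁻¹ = ac⟩` of order 16, every 2-dimensional complex irreducible character `χ` of `G`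
has fourth Frobenius–Schur indicator `ν₄(χ) = (1/16) Σ_{g∈G} χ(g⁴) = 2`. -/
theorem stmt_12 {G : Type*} [Group G] [Fintype G] (a b c : G)
    (ha : a ^ 4 = 1) (hb : b ^ 2 = 1) (hc : c ^ 2 = 1)
    (hac : a * c = c * a) (hbc : b * c = c * b) (hbab : b * a * b⁻¹ = a * c)
    (hgen : Subgroup.closure {a, b, c} = ⊤) (hcard : Fintype.card G = 16) :
    ∀ (V : Type) (_ : AddCommGroup V) (_ : Module ℂ V) (ρ : Representation ℂ G V),
      Module.finrank ℂ V = 2 →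
      (∀ W : Submodule ℂ V, (∀ g : G, ∀ v ∈ W, ρ g v ∈ W) → W = ⊥ ∨ W = ⊤) →
      (1 / 16 : ℂ) * ∑ g : G, LinearMap.trace ℂ V (ρ (g ^ 4)) = 2 := by
  -- `c` is central.
  have hcg : ∀ g : G, Commute c g := by
    intro g
    have hle : Subgroup.closure ({a, b, c} : Set G) ≤ Subgroup.centralizer {c} := by
      rw [Subgroup.closure_le]
      intro x hx
      rw [SetLike.mem_coe, Subgroup.mem_centralizer_iff]
      intro h hh
      simp only [Set.mem_singleton_iff] at hh
      subst hh
      rcases hx with rfl | rfl | rfl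
      · exact hac.symm
      · exact hbc.symm
      · rfl
    have hg : g ∈ Subgroup.centralizer {c} := hle (by rw [hgen]; trivial)
    exact Subgroup.mem_centralizer_iff.mp hg c rfl
  have hcz : ∀ (m : ℤ) (g : G), c ^ m * g = g * c ^ m :=
    fun m g => ((hcg g).zpow_left m).eq
  have hbb : b * b = 1 := by rw [← sq]; exact hb
  -- conjugation by b on powers of a
  have hba : ∀ m : ℤ, b * a ^ m = a ^ m * c ^ m * b := by
    intro m
    have h1 : b * a ^ m * b⁻¹ = (b * a * b⁻¹) ^ m := conj_zpow.symm
    have h2 : (b * a * b⁻¹) ^ m = a ^ m * c ^ m := by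
      rw [hbab]; exact Commute.mul_zpow (show Commute a c from hac) m
    calc b * a ^ m = (b * a ^ m * b⁻¹) * b := by group
      _ = a ^ m * c ^ m * b := by rw [h1, h2]
  -- every group element has the normal form a^i c^k or a^i b c^k
  have hform : ∀ g : G, (∃ i k : ℤ, g = a ^ i * c ^ k) ∨ (∃ i k : ℤ, g = a ^ i * b * c ^ k) := by
    intro g
    have hg : g ∈ Subgroup.closure ({a, b, c} : Set G) := by rw [hgen]; trivial
    induction hg using Subgroup.closure_induction with
    | mem x hx =>
      rcases hx with rfl | rfl | rfl
      · exact Or.inl ⟨1, 0, by simp⟩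
      · exact Or.inr ⟨0, 0, by simp⟩
      · exact Or.inl ⟨0, 1, by simp⟩
    | one => exact Or.inl ⟨0, 0, by simp⟩
    | mul x y _ _ hx hy =>
      rcases hx with ⟨i, k, rfl⟩ | ⟨i, k, rfl⟩ <;> rcases hy with ⟨m, p, rfl⟩ | ⟨m, p, rfl⟩
      · refine Or.inl ⟨i + m, k + p, ?_⟩
        rw [zpow_add, zpow_add]
        calc a ^ i * c ^ k * (a ^ m * c ^ p)
            = a ^ i * (c ^ k * a ^ m) * c ^ p := by group
          _ = a ^ i * (a ^ m * c ^ k) * c ^ p := by rw [hcz k (a ^ m)]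
          _ = a ^ i * a ^ m * (c ^ k * c ^ p) := by group
      · refine Or.inr ⟨i + m, k + p, ?_⟩
        rw [zpow_add, zpow_add]
        calc a ^ i * c ^ k * (a ^ m * b * c ^ p)
            = a ^ i * (c ^ k * a ^ m) * b * c ^ p := by group
          _ = a ^ i * (a ^ m * c ^ k) * b * c ^ p := by rw [hcz k (a ^ m)]
          _ = a ^ i * a ^ m * (c ^ k * b) * c ^ p := by group
          _ = a ^ i * a ^ m * (b * c ^ k) * c ^ p := by rw [hcz k b]
          _ = a ^ i * a ^ m * b * (c ^ k * c ^ p) := by group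
      · refine Or.inr ⟨i + m, k + p + m, ?_⟩
        rw [zpow_add, zpow_add, zpow_add]
        calc a ^ i * b * c ^ k * (a ^ m * c ^ p)
            = a ^ i * b * (c ^ k * a ^ m) * c ^ p := by group
          _ = a ^ i * b * (a ^ m * c ^ k) * c ^ p := by rw [hcz k (a ^ m)]
          _ = a ^ i * (b * a ^ m) * (c ^ k * c ^ p) := by group
          _ = a ^ i * (a ^ m * c ^ m * b) * (c ^ k * c ^ p) := by rw [hba m]
          _ = a ^ i * a ^ m * c ^ m * (b * c ^ (k + p)) := by rw [← zpow_add]; group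
          _ = a ^ i * a ^ m * c ^ m * (c ^ (k + p) * b) := by rw [hcz (k + p) b]
          _ = a ^ i * a ^ m * (c ^ (k + p + m) * b) := by
              rw [zpow_add, zpow_add]; group
          _ = a ^ i * a ^ m * (b * c ^ (k + p + m)) := by rw [hcz (k + p + m) b]
          _ = a ^ i * a ^ m * b * (c ^ k * c ^ p * c ^ m) := by
              rw [zpow_add, zpow_add]; group
      · refine Or.inl ⟨i + m, k + p + m, ?_⟩
        rw [zpow_add, zpow_add, zpow_add]
        calc a ^ i * b * c ^ k * (a ^ m * b * c ^ p)
            = a ^ i * b * (c ^ k * a ^ m) * b * c ^ p := by group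
          _ = a ^ i * b * (a ^ m * c ^ k) * b * c ^ p := by rw [hcz k (a ^ m)]
          _ = a ^ i * (b * a ^ m) * (c ^ k * b) * c ^ p := by group
          _ = a ^ i * (a ^ m * c ^ m * b) * (b * c ^ k) * c ^ p := by rw [hba m, hcz k b]
          _ = a ^ i * a ^ m * c ^ m * (b * b) * (c ^ k * c ^ p) := by group
          _ = a ^ i * a ^ m * (c ^ k * c ^ p * c ^ m) := by rw [hbb]; group
    | inv x _ hx =>
      rcases hx with ⟨i, k, rfl⟩ | ⟨i, k, rfl⟩
      · refine Or.inl ⟨-i, -k, ?_⟩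
        rw [mul_inv_rev, ← zpow_neg, ← zpow_neg, hcz (-k) (a ^ (-i))]
      · refine Or.inr ⟨-i, -i - k, ?_⟩
        have hbinv : b⁻¹ = b := inv_eq_of_mul_eq_one_right hbb
        calc (a ^ i * b * c ^ k)⁻¹ = (c ^ k)⁻¹ * b⁻¹ * (a ^ i)⁻¹ := by group
          _ = c ^ (-k) * (b * a ^ (-i)) := by rw [hbinv, ← zpow_neg, ← zpow_neg]; group
          _ = c ^ (-k) * (a ^ (-i) * c ^ (-i) * b) := by rw [hba (-i)]
          _ = a ^ (-i) * (c ^ (-k) * c ^ (-i)) * b := by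
              rw [← mul_assoc, ← mul_assoc, hcz (-k) (a ^ (-i))]; group
          _ = a ^ (-i) * (c ^ (-k + -i) * b) := by rw [← zpow_add]; group
          _ = a ^ (-i) * (b * c ^ (-k + -i)) := by rw [hcz (-k + -i) b]
          _ = a ^ (-i) * b * c ^ (-i - k) := by rw [show -k + -i = -i - k from by ring]; group
  -- hence every element has fourth power 1
  have hA : a ^ (4 : ℤ) = 1 := by
    rw [show (4 : ℤ) = ((4 : ℕ) : ℤ) from rfl, zpow_natCast, ha]
  have hC : c ^ (2 : ℤ) = 1 := by
    rw [show (2 : ℤ) = ((2 : ℕ) : ℤ) from rfl, zpow_natCast, hc]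
  have ha4 : ∀ i : ℤ, a ^ (4 * i) = 1 := by
    intro i; rw [zpow_mul, hA, one_zpow]
  have hc2 : ∀ i : ℤ, c ^ (2 * i) = 1 := by
    intro i; rw [zpow_mul, hC, one_zpow]
  have h4 : ∀ g : G, g ^ 4 = 1 := by
    intro g
    have hcomm2 : ∀ m p : ℤ, a ^ m * c ^ p * (a ^ m * c ^ p) = a ^ (m + m) * c ^ (p + p) := by
      intro m p
      rw [zpow_add, zpow_add]
      calc a ^ m * c ^ p * (a ^ m * c ^ p)
          = a ^ m * (c ^ p * a ^ m) * c ^ p := by group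
        _ = a ^ m * (a ^ m * c ^ p) * c ^ p := by rw [hcz p (a ^ m)]
        _ = a ^ m * a ^ m * (c ^ p * c ^ p) := by group
    rcases hform g with ⟨i, k, rfl⟩ | ⟨i, k, rfl⟩
    · have s1 : (a ^ i * c ^ k) ^ 2 = a ^ (i + i) * c ^ (k + k) := by rw [sq, hcomm2]
      rw [show 4 = 2 * 2 from rfl, pow_mul, s1, sq, hcomm2,
        show i + i + (i + i) = 4 * i from by ring, show k + k + (k + k) = 2 * (2 * k) from by ring,
        ha4, hc2, one_mul]
    · have hsq : (a ^ i * b * c ^ k) ^ 2 = a ^ (2 * i) * c ^ (2 * k + i) := by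
        rw [sq]
        calc a ^ i * b * c ^ k * (a ^ i * b * c ^ k)
            = a ^ i * b * (c ^ k * a ^ i) * b * c ^ k := by group
          _ = a ^ i * b * (a ^ i * c ^ k) * b * c ^ k := by rw [hcz k (a ^ i)]
          _ = a ^ i * (b * a ^ i) * (c ^ k * b) * c ^ k := by group
          _ = a ^ i * (a ^ i * c ^ i * b) * (b * c ^ k) * c ^ k := by rw [hba i, hcz k b]
          _ = a ^ i * a ^ i * c ^ i * (b * b) * (c ^ k * c ^ k) := by group
          _ = a ^ i * a ^ i * (c ^ i * (c ^ k * c ^ k)) := by rw [hbb]; group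
          _ = a ^ (2 * i) * c ^ (2 * k + i) := by
              rw [show (2 : ℤ) * i = i + i from by ring,
                show (2 : ℤ) * k + i = i + (k + k) from by ring,
                zpow_add, zpow_add, zpow_add]
      rw [show 4 = 2 * 2 from rfl, pow_mul, hsq, sq, hcomm2,
        show 2 * i + 2 * i = 4 * i from by ring,
        show 2 * k + i + (2 * k + i) = 2 * (2 * k + i) from by ring, ha4, hc2, one_mul]
  -- now compute the sum
  intro V iV mV ρ hdim _
  letI : AddCommGroup V := iV
  letI : Module ℂ V := mV
  haveI : FiniteDimensional ℂ V := FiniteDimensional.of_finrank_pos (by rw [hdim]; norm_num)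
  have htr : ∀ g : G, LinearMap.trace ℂ V (ρ (g ^ 4)) = 2 := by
    intro g
    rw [h4 g, map_one, LinearMap.trace_one, hdim]
    norm_num
  rw [Finset.sum_congr rfl (fun g _ => htr g), Finset.sum_const, Finset.card_univ, hcard]
  norm_num
end
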